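/- arXiv:2501.08813 — 4 statements merged into one kernel-verified Lean document; each statement's English description precedes it below -/
import Mathlib

section
/- Let a₁ : ℂ → ℂ be the ℝ-linear map with a₁(1) = 1 and a₁(ζ^(q-1)) = ζ, where ζ = e^(πi/q), q ≥ 3. Then for every z in the open sector S(1, ζ^(q-1)) = {x₁·1 + x₂·ζ^(q-1) : x₁ > 0, x₂ > 0}, one has |a₁(z)| > |z|. -/
/-!
Write `w = ζ ^ (q - 1) = -ζ⁻¹`, so that `Re w = -cos (π / q) = -λ / 2`. For `z = x₁ + x₂ w`,
`a₁ z = z + λ x₂` and hence `‖a₁ z‖² - ‖z‖² = 2 λ x₂ Re z + λ² x₂² = 2 λ x₁ x₂`, which is positive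
because `λ > 0` for `q ≥ 3`.
-/

open Complex

theorem Real.cos_pi_div_pos {x : ℝ} (hx : 2 < x) : 0 < Real.cos (Real.pi / x) := by
  apply Real.cos_pos_of_mem_Ioo
  constructor
  · linarith [div_pos Real.pi_pos (by linarith : (0:ℝ) < x), Real.pi_pos]
  · exact div_lt_div_of_pos_left Real.pi_pos two_pos hx

theorem Complex.exp_pi_mul_I_div_pow_pred_re {n : ℕ} (hn : 1 ≤ n) :
    (exp (Real.pi * I / n) ^ (n - 1)).re = -Real.cos (Real.pi / n) := by
  have hn0 : (n : ℂ) ≠ 0 := by exact_mod_cast (by omega : n ≠ 0)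
  have hpow : exp (Real.pi * I / n) ^ n = -1 := by
    rw [← exp_nat_mul, mul_div_cancel₀ _ hn0, exp_pi_mul_I]
  have harg : -(Real.pi * I / n) = ((-(Real.pi / n) : ℝ) : ℂ) * I := by push_cast; ring
  rw [pow_sub₀ _ (exp_ne_zero _) hn, pow_one, hpow, ← exp_neg, harg, neg_one_mul, neg_re,
    exp_ofReal_mul_I_re, Real.cos_neg]

theorem Complex.sq_norm_add_two_mul_add {w : ℂ} {c : ℝ} (hw : w.re = -c) (x₁ x₂ : ℝ) :
    ‖((x₁ + 2 * c * x₂ : ℝ) : ℂ) + x₂ * w‖ ^ 2 = ‖(x₁ : ℂ) + x₂ * w‖ ^ 2 + 4 * c * x₁ * x₂ := by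
  simp only [Complex.sq_norm, normSq_apply, add_re, add_im, ofReal_re, ofReal_im, mul_re,
    mul_im, hw]
  ring

theorem Complex.norm_lt_norm_add_two_mul_add {w : ℂ} {c : ℝ} (hw : w.re = -c) (hc : 0 < c)
    {x₁ x₂ : ℝ} (hx₁ : 0 < x₁) (hx₂ : 0 < x₂) :
    ‖(x₁ : ℂ) + x₂ * w‖ < ‖((x₁ + 2 * c * x₂ : ℝ) : ℂ) + x₂ * w‖ := by
  refine lt_of_pow_lt_pow_left₀ 2 (norm_nonneg _) ?_
  rw [sq_norm_add_two_mul_add hw]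
  have : 0 < 4 * c * x₁ * x₂ := by positivity
  linarith

theorem stmt_6 (q : ℕ) (hq : 3 ≤ q)
    (ζ : ℂ) (hζ : ζ = Complex.exp (Real.pi * Complex.I / q))
    (lam : ℝ) (hlam : lam = 2 * Real.cos (Real.pi / q))
    (a₁ : ℂ → ℂ)
    (ha₁ : ∀ x₁ x₂ : ℝ, a₁ ((x₁ : ℂ) + (x₂ : ℂ) * ζ ^ (q - 1)) =
      ((x₁ + lam * x₂ : ℝ) : ℂ) + (x₂ : ℂ) * ζ ^ (q - 1)) :
    ∀ x₁ x₂ : ℝ, 0 < x₁ → 0 < x₂ →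
      ‖(x₁ : ℂ) + (x₂ : ℂ) * ζ ^ (q - 1)‖ <
      ‖a₁ ((x₁ : ℂ) + (x₂ : ℂ) * ζ ^ (q - 1))‖ := by
  intro x₁ x₂ hx₁ hx₂
  have hre : (ζ ^ (q - 1)).re = -Real.cos (Real.pi / q) :=
    hζ ▸ exp_pi_mul_I_div_pow_pred_re (by omega)
  have hcos : 0 < Real.cos (Real.pi / q) :=
    Real.cos_pi_div_pos (by exact_mod_cast (by omega : 2 < q))
  rw [ha₁, hlam]
  exact norm_lt_norm_add_two_mul_add hre hcos hx₁ hx₂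
end

section
/- For q = 6, λ = √3, the group G₆ generated by V = [[0,-1],[1,0]] and A₁ = [[1,√3],[0,1]] inside SL₂(ℝ) equals the set of matrices [[a, b√3],[c√3, d]] with a,b,c,d ∈ ℤ, ad − 3bc = 1, union the set of matrices [[a√3, b],[c, d√3]] with a,b,c,d ∈ ℤ, 3ad − bc = 1. -/
/-!
Matrices of the two shapes are the homogeneous ones for the grading of `ℤ[√3]` by the
parity of the power of `√3`, so they form a subgroup containing `V` and `A₁`.
Conversely, descend on the square of the lower-left entry `c` of `M`, an integer: if
`c ≠ 0`, choose `k` with `|M₀₀ + k√3 c| ≤ (√3 / 2)|c|`; the lower-left entry of `V A₁ᵏ M`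
is `M₀₀ + k√3 c`, whose square is at most `3c²/4 < c²`. If `c = 0`, the determinant
forces `M = ±A₁ᵇ`.
-/

open Matrix
open scoped MatrixGroups

namespace SqrtForm

variable (s : ℝ)

/- With `s * s` an integer, `ℤ[s]` is graded by the parity of the power of `s`; even and odd
matrices are those whose `(i, j)` entry is homogeneous of degree `i + j`, resp. `i + j + 1`. -/
def IsEven (M : Matrix (Fin 2) (Fin 2) ℝ) : Prop :=
  ∃ a b c d : ℤ, M = !![(a : ℝ), b * s; c * s, d]

def IsOdd (M : Matrix (Fin 2) (Fin 2) ℝ) : Prop :=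
  ∃ a b c d : ℤ, M = !![a * s, (b : ℝ); c, d * s]

variable {s} {m : ℤ} {M N : Matrix (Fin 2) (Fin 2) ℝ}

theorem IsEven.mul (hs : s * s = m) (hM : IsEven s M) (hN : IsEven s N) : IsEven s (M * N) := by
  obtain ⟨a, b, c, d, rfl⟩ := hM
  obtain ⟨e, f, g, h, rfl⟩ := hN
  refine ⟨a * e + m * b * g, a * f + b * h, c * e + d * g, m * c * f + d * h, ?_⟩
  rw [mul_fin_two]
  push_cast
  congr 2 <;> grind

theorem IsEven.mul_isOdd (hs : s * s = m) (hM : IsEven s M) (hN : IsOdd s N) :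
    IsOdd s (M * N) := by
  obtain ⟨a, b, c, d, rfl⟩ := hM
  obtain ⟨e, f, g, h, rfl⟩ := hN
  refine ⟨a * e + b * g, a * f + m * b * h, m * c * e + d * g, c * f + d * h, ?_⟩
  rw [mul_fin_two]
  push_cast
  congr 2 <;> grind

theorem IsOdd.mul_isEven (hs : s * s = m) (hM : IsOdd s M) (hN : IsEven s N) :
    IsOdd s (M * N) := by
  obtain ⟨a, b, c, d, rfl⟩ := hM
  obtain ⟨e, f, g, h, rfl⟩ := hN
  refine ⟨a * e + b * g, m * a * f + b * h, c * e + m * d * g, c * f + d * h, ?_⟩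
  rw [mul_fin_two]
  push_cast
  congr 2 <;> grind

theorem IsOdd.mul (hs : s * s = m) (hM : IsOdd s M) (hN : IsOdd s N) : IsEven s (M * N) := by
  obtain ⟨a, b, c, d, rfl⟩ := hM
  obtain ⟨e, f, g, h, rfl⟩ := hN
  refine ⟨m * a * e + b * g, a * f + b * h, c * e + d * g, c * f + m * d * h, ?_⟩
  rw [mul_fin_two]
  push_cast
  congr 2 <;> grind

theorem IsEven.adjugate (hM : IsEven s M) : IsEven s M.adjugate := by
  obtain ⟨a, b, c, d, rfl⟩ := hM
  exact ⟨d, -b, -c, a, by rw [adjugate_fin_two_of]; push_cast; ring_nf⟩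

theorem IsOdd.adjugate (hM : IsOdd s M) : IsOdd s M.adjugate := by
  obtain ⟨a, b, c, d, rfl⟩ := hM
  exact ⟨d, -b, -c, a, by rw [adjugate_fin_two_of]; push_cast; ring_nf⟩

theorem det_even (hs : s * s = m) (a b c d : ℤ) :
    det !![(a : ℝ), b * s; c * s, d] = ((a * d - m * b * c : ℤ) : ℝ) := by
  rw [det_fin_two_of]; push_cast; linear_combination (-(b * c : ℝ)) * hs

theorem det_odd (hs : s * s = m) (a b c d : ℤ) :
    det !![a * s, (b : ℝ); c, d * s] = ((m * a * d - b * c : ℤ) : ℝ) := by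
  rw [det_fin_two_of]; push_cast; linear_combination ((a * d : ℝ)) * hs

end SqrtForm

section CommRing

variable {R : Type*} [CommRing R]

theorem coe_zpow_of_coe_eq_upperUnitriangular {A : SL(2, R)} {t : R}
    (hA : (A : Matrix (Fin 2) (Fin 2) R) = !![1, t; 0, 1]) (k : ℤ) :
    ((A ^ k : SL(2, R)) : Matrix (Fin 2) (Fin 2) R) = !![1, k * t; 0, 1] := by
  have hinv : ((A⁻¹ : SL(2, R)) : Matrix (Fin 2) (Fin 2) R) = !![1, -t; 0, 1] := by
    simp [hA, adjugate_fin_two]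
  induction k using Int.induction_on with
  | zero => simp [one_fin_two]
  | succ k ih =>
    rw [_root_.zpow_add_one, Matrix.SpecialLinearGroup.coe_mul, ih, hA, mul_fin_two]
    congrm !![?_, ?_; ?_, ?_] <;> push_cast <;> ring
  | pred k ih =>
    rw [_root_.zpow_sub_one, Matrix.SpecialLinearGroup.coe_mul, ih, hinv, mul_fin_two]
    congrm !![?_, ?_; ?_, ?_] <;> push_cast <;> ring

theorem lowerLeft_mul_zpow_mul {V A : SL(2, R)} {t : R}
    (hV : (V : Matrix (Fin 2) (Fin 2) R) = !![0, -1; 1, 0])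
    (hA : (A : Matrix (Fin 2) (Fin 2) R) = !![1, t; 0, 1]) (k : ℤ) (M : SL(2, R)) :
    ((V * A ^ k * M : SL(2, R)) : Matrix (Fin 2) (Fin 2) R) 1 0 = M 0 0 + k * t * M 1 0 := by
  simp [coe_zpow_of_coe_eq_upperUnitriangular hA, hV, Matrix.mul_apply, Fin.sum_univ_two]

end CommRing

theorem exists_int_abs_add_mul_le {α : Type*} [Field α] [LinearOrder α] [IsStrictOrderedRing α]
    [FloorRing α] (x : α) {y : α} (hy : y ≠ 0) : ∃ k : ℤ, |x + k * y| ≤ |y| / 2 := by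
  refine ⟨-round (x / y), ?_⟩
  calc |x + (-round (x / y) : ℤ) * y| = |x / y - round (x / y)| * |y| := by
        rw [← abs_mul]; congr 1; field_simp; push_cast; ring
    _ ≤ 1 / 2 * |y| := by gcongr; exact abs_sub_round _
    _ = |y| / 2 := by ring

theorem sqrt_three_mul_self : √3 * √3 = ((3 : ℤ) : ℝ) := by
  push_cast; exact Real.mul_self_sqrt (by norm_num)

open SqrtForm in
def sqrtThreeForms : Subgroup SL(2, ℝ) where
  carrier := {M | IsEven √3 M ∨ IsOdd √3 M}
  mul_mem' := by
    rintro M N (hM | hM) (hN | hN) <;>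
      simp only [Set.mem_ofPred_eq, Matrix.SpecialLinearGroup.coe_mul]
    exacts [Or.inl (hM.mul sqrt_three_mul_self hN), Or.inr (hM.mul_isOdd sqrt_three_mul_self hN),
      Or.inr (hM.mul_isEven sqrt_three_mul_self hN), Or.inl (hM.mul sqrt_three_mul_self hN)]
  one_mem' := Or.inl ⟨1, 0, 0, 1, by simp [one_fin_two]⟩
  inv_mem' := by
    rintro M (hM | hM) <;>
      simp only [Set.mem_ofPred_eq, Matrix.SpecialLinearGroup.coe_inv]
    exacts [Or.inl hM.adjugate, Or.inr hM.adjugate]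

theorem mem_sqrtThreeForms_iff {M : SL(2, ℝ)} : M ∈ sqrtThreeForms ↔
    ((∃ a b c d : ℤ, (M : Matrix (Fin 2) (Fin 2) ℝ) =
        !![(a : ℝ), b * √3; c * √3, (d : ℝ)] ∧ a * d - 3 * b * c = 1) ∨
     (∃ a b c d : ℤ, (M : Matrix (Fin 2) (Fin 2) ℝ) =
        !![a * √3, (b : ℝ); (c : ℝ), d * √3] ∧ 3 * a * d - b * c = 1)) := by
  have hdet := M.prop
  refine or_congr ⟨?_, fun ⟨a, b, c, d, h, _⟩ => ⟨a, b, c, d, h⟩⟩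
    ⟨?_, fun ⟨a, b, c, d, h, _⟩ => ⟨a, b, c, d, h⟩⟩ <;> rintro ⟨a, b, c, d, h⟩ <;>
    refine ⟨a, b, c, d, h, ?_⟩
  · rw [h, SqrtForm.det_even sqrt_three_mul_self] at hdet; exact_mod_cast hdet
  · rw [h, SqrtForm.det_odd sqrt_three_mul_self] at hdet; exact_mod_cast hdet

theorem exists_sq_lowerLeft_eq_natCast {M : SL(2, ℝ)} (hM : M ∈ sqrtThreeForms) :
    ∃ n : ℕ, M 1 0 ^ 2 = n := by
  rcases hM with ⟨a, b, c, d, h⟩ | ⟨a, b, c, d, h⟩ <;> rw [h]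
  · refine ⟨3 * c.natAbs ^ 2, ?_⟩
    simp [mul_pow, Real.sq_sqrt, mul_comm]
  · exact ⟨c.natAbs ^ 2, by simp⟩

section Generators

variable {V A₁ : SL(2, ℝ)}

theorem exists_zpow_sq_lowerLeft_lt {t : ℝ} (hV : (V : Matrix (Fin 2) (Fin 2) ℝ) = !![0, -1; 1, 0])
    (hA₁ : (A₁ : Matrix (Fin 2) (Fin 2) ℝ) = !![1, t; 0, 1]) (ht₀ : t ≠ 0) (ht : t ^ 2 < 4)
    {M : SL(2, ℝ)} (hM : M 1 0 ≠ 0) :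
    ∃ k : ℤ, ((V * A₁ ^ k * M : SL(2, ℝ)) : Matrix (Fin 2) (Fin 2) ℝ) 1 0 ^ 2 < M 1 0 ^ 2 := by
  obtain ⟨k, hk⟩ := exists_int_abs_add_mul_le (M 0 0) (mul_ne_zero ht₀ hM)
  refine ⟨k, ?_⟩
  rw [lowerLeft_mul_zpow_mul hV hA₁, mul_assoc]
  have hsq := pow_le_pow_left₀ (abs_nonneg _) hk 2
  rw [sq_abs, div_pow, sq_abs, mul_pow] at hsq
  nlinarith [sq_pos_of_ne_zero hM]

theorem closure_le_sqrtThreeForms (hV : (V : Matrix (Fin 2) (Fin 2) ℝ) = !![0, -1; 1, 0])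
    (hA₁ : (A₁ : Matrix (Fin 2) (Fin 2) ℝ) = !![1, √3; 0, 1]) :
    Subgroup.closure {V, A₁} ≤ sqrtThreeForms := by
  rw [Subgroup.closure_le, Set.insert_subset_iff, Set.singleton_subset_iff]
  exact ⟨Or.inr ⟨0, -1, 1, 0, by simp [hV]⟩, Or.inl ⟨1, 1, 0, 1, by simp [hA₁]⟩⟩

theorem mem_closure_of_lowerLeft_eq_zero (hV : (V : Matrix (Fin 2) (Fin 2) ℝ) = !![0, -1; 1, 0])
    (hA₁ : (A₁ : Matrix (Fin 2) (Fin 2) ℝ) = !![1, √3; 0, 1]) {M : SL(2, ℝ)}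
    (hM : M ∈ sqrtThreeForms) (h0 : M 1 0 = 0) : M ∈ Subgroup.closure {V, A₁} := by
  have hVmem : V ∈ Subgroup.closure {V, A₁} := Subgroup.subset_closure (by simp)
  have hAmem : A₁ ∈ Subgroup.closure {V, A₁} := Subgroup.subset_closure (by simp)
  rcases mem_sqrtThreeForms_iff.1 hM with ⟨a, b, c, d, h, hdet⟩ | ⟨a, b, c, d, h, hdet⟩
  · obtain rfl : c = 0 := by simpa [h] using h0
    rcases Int.eq_one_or_neg_one_of_mul_eq_one' (by simpa using hdet) with ⟨rfl, rfl⟩ | ⟨rfl, rfl⟩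
    · have : M = A₁ ^ b := Subtype.ext (by
        rw [h, coe_zpow_of_coe_eq_upperUnitriangular hA₁]; simp)
      exact this ▸ Subgroup.zpow_mem _ hAmem b
    · -- `V * V = -1`
      have : M = V * V * A₁ ^ (-b) := Subtype.ext (by
        rw [h, Matrix.SpecialLinearGroup.coe_mul, Matrix.SpecialLinearGroup.coe_mul,
          coe_zpow_of_coe_eq_upperUnitriangular hA₁, hV]
        simp)
      exact this ▸ mul_mem (mul_mem hVmem hVmem) (Subgroup.zpow_mem _ hAmem _)
  · obtain rfl : c = 0 := by simpa [h] using h0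
    have h3 : (3 : ℤ) ∣ 1 := ⟨a * d, by linear_combination -hdet⟩
    norm_num at h3

theorem sqrtThreeForms_le_closure (hV : (V : Matrix (Fin 2) (Fin 2) ℝ) = !![0, -1; 1, 0])
    (hA₁ : (A₁ : Matrix (Fin 2) (Fin 2) ℝ) = !![1, √3; 0, 1]) :
    sqrtThreeForms ≤ Subgroup.closure {V, A₁} := by
  suffices ∀ n : ℕ, ∀ M ∈ sqrtThreeForms, M 1 0 ^ 2 = n → M ∈ Subgroup.closure {V, A₁} from
    fun M hM => (exists_sq_lowerLeft_eq_natCast hM).elim fun n => this n M hM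
  intro n
  induction n using Nat.strong_induction_on with
  | _ n ih =>
  intro M hM hn
  by_cases h0 : M 1 0 = 0
  · exact mem_closure_of_lowerLeft_eq_zero hV hA₁ hM h0
  obtain ⟨k, hk⟩ := exists_zpow_sq_lowerLeft_lt hV hA₁ (by positivity) (by norm_num) h0
  have hVA : V * A₁ ^ k ∈ Subgroup.closure {V, A₁} :=
    mul_mem (Subgroup.subset_closure (by simp))
      (Subgroup.zpow_mem _ (Subgroup.subset_closure (by simp)) k)
  have hN : V * A₁ ^ k * M ∈ sqrtThreeForms := mul_mem (closure_le_sqrtThreeForms hV hA₁ hVA) hM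
  obtain ⟨m, hm⟩ := exists_sq_lowerLeft_eq_natCast hN
  have hmn : m < n := Nat.cast_lt (α := ℝ).1 (hm ▸ hn ▸ hk)
  rw [show M = (V * A₁ ^ k)⁻¹ * (V * A₁ ^ k * M) by group]
  exact mul_mem (inv_mem hVA) (ih m hmn _ hN hm)

end Generators

theorem stmt_13 (V A₁ : Matrix.SpecialLinearGroup (Fin 2) ℝ)
    (hV : (V : Matrix (Fin 2) (Fin 2) ℝ) = !![0, -1; 1, 0])
    (hA₁ : (A₁ : Matrix (Fin 2) (Fin 2) ℝ) = !![1, Real.sqrt 3; 0, 1]) :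
    ∀ M : Matrix.SpecialLinearGroup (Fin 2) ℝ,
      M ∈ Subgroup.closure {V, A₁} ↔
      ((∃ a b c d : ℤ, (M : Matrix (Fin 2) (Fin 2) ℝ) =
          !![(a : ℝ), b * Real.sqrt 3; c * Real.sqrt 3, (d : ℝ)] ∧ a * d - 3 * b * c = 1) ∨
       (∃ a b c d : ℤ, (M : Matrix (Fin 2) (Fin 2) ℝ) =
          !![a * Real.sqrt 3, (b : ℝ); (c : ℝ), d * Real.sqrt 3] ∧ 3 * a * d - b * c = 1)) := by
  intro M
  rw [← mem_sqrtThreeForms_iff,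
    le_antisymm (closure_le_sqrtThreeForms hV hA₁) (sqrtThreeForms_le_closure hV hA₁)]
end

section
/- Let λ = (1+√5)/2. For the functions f(x) = (x²+λx+1)/(x²−λx+1) and g(x) = (x²−λ⁻¹x+1)/(x²+λ⁻¹x+1) on ℝ: for all x₁ ∈ [1, λ] and all x₂ ∈ ℝ, f(x₁)·g(x₂) > 1. -/
theorem stmt_17 (lam : ℝ) (hlam : lam = (1 + Real.sqrt 5) / 2) :
    ∀ x₁ x₂ : ℝ, 1 ≤ x₁ → x₁ ≤ lam →
      1 < ((x₁ ^ 2 + lam * x₁ + 1) / (x₁ ^ 2 - lam * x₁ + 1)) *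
          ((x₂ ^ 2 - lam⁻¹ * x₂ + 1) / (x₂ ^ 2 + lam⁻¹ * x₂ + 1)) := by
  intro x₁ x₂ h1 h2
  have hs : Real.sqrt 5 ^ 2 = 5 := Real.sq_sqrt (by norm_num)
  have hs2 : (2:ℝ) < Real.sqrt 5 := by nlinarith [Real.sqrt_nonneg 5]
  have hs3 : Real.sqrt 5 < 3 := by nlinarith [Real.sqrt_nonneg 5]
  have hsq : lam ^ 2 = lam + 1 := by rw [hlam]; nlinarith
  have hl1 : (1:ℝ) < lam := by rw [hlam]; linarith
  have hinv : lam⁻¹ = lam - 1 := by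
    have h : lam * (lam - 1) = 1 := by nlinarith
    exact inv_eq_of_mul_eq_one_right h
  rw [hinv]
  have hd1 : 0 < x₁ ^ 2 - lam * x₁ + 1 := by nlinarith [sq_nonneg (2 * x₁ - lam)]
  have hd2 : 0 < x₂ ^ 2 + (lam - 1) * x₂ + 1 := by
    nlinarith [sq_nonneg (2 * x₂ + (lam - 1))]
  rw [div_mul_div_comm, lt_div_iff₀ (by positivity), one_mul]
  -- reduces to: lam * x₁ * (x₂^2+1) > (lam-1) * x₂ * (x₁^2+1)
  have key : (lam - 1) * x₂ * (x₁ ^ 2 + 1) < lam * x₁ * (x₂ ^ 2 + 1) := by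
    rcases le_or_gt x₂ 0 with hx2 | hx2
    · have : (lam - 1) * x₂ * (x₁ ^ 2 + 1) ≤ 0 := by
        apply mul_nonpos_of_nonpos_of_nonneg
        · exact mul_nonpos_of_nonneg_of_nonpos (by linarith) hx2
        · positivity
      have hpos : 0 < lam * x₁ * (x₂ ^ 2 + 1) := by positivity
      linarith
    · nlinarith [mul_nonneg hx2.le (sq_nonneg (x₂ - 1)),
        mul_nonneg (mul_nonneg hx2.le (by linarith : (0:ℝ) ≤ x₁ - 1)) (by linarith : (0:ℝ) ≤ lam - x₁),
        mul_pos hx2 (by linarith : (0:ℝ) < x₁)]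
  nlinarith [key, mul_pos hd1 hd2]
end

section
/- Let q ≥ 3, ζ = e^(πi/q), λ = 2cos(π/q), and a₁, a₂ the ℝ-linear automorphisms of ℂ given in the basis (1, ζ^(q-1)) by matrices [[1,λ],[0,1]] and [[1,0],[-λ,1]] respectively. Then a₁ ∘ a₂ = multiplication by −ζ² on ℂ; in particular (a₁a₂)^q = id if q ≡ 2 mod 4, (a₁a₂)^(q/2) = −id if q ≡ 0 mod 4, and (a₁a₂)^(2q) = id for all q. -/
theorem stmt_19 (q : ℕ) (hq : 3 ≤ q)
    (ζ : ℂ) (hζ : ζ = Complex.exp (Real.pi * Complex.I / q))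
    (lam : ℝ) (hlam : lam = 2 * Real.cos (Real.pi / q))
    (a₁ a₂ : ℂ → ℂ)
    (ha₁ : ∀ x₁ x₂ : ℝ, a₁ ((x₁ : ℂ) + (x₂ : ℂ) * ζ ^ (q - 1)) =
      ((x₁ + lam * x₂ : ℝ) : ℂ) + (x₂ : ℂ) * ζ ^ (q - 1))
    (ha₂ : ∀ x₁ x₂ : ℝ, a₂ ((x₁ : ℂ) + (x₂ : ℂ) * ζ ^ (q - 1)) =
      (x₁ : ℂ) + ((x₂ - lam * x₁ : ℝ) : ℂ) * ζ ^ (q - 1)) :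
    (∀ z : ℂ, a₁ (a₂ z) = -ζ ^ 2 * z) ∧
    (q % 4 = 2 → ∀ z : ℂ, (a₁ ∘ a₂)^[q] z = z) ∧
    (q % 4 = 0 → ∀ z : ℂ, (a₁ ∘ a₂)^[q / 2] z = -z) ∧
    (∀ z : ℂ, (a₁ ∘ a₂)^[2 * q] z = z) := by
  have hq0 : (q : ℂ) ≠ 0 := Nat.cast_ne_zero.mpr (by omega)
  have hζ' : ζ = Complex.exp ((Real.pi / q : ℝ) * Complex.I) := by
    rw [hζ]; congr 1; push_cast; field_simp
  have hζ0 : ζ ≠ 0 := by rw [hζ]; exact Complex.exp_ne_zero _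
  have hζq : ζ ^ q = -1 := by
    rw [hζ, ← Complex.exp_nat_mul]
    rw [show (q : ℂ) * (Real.pi * Complex.I / q) = Real.pi * Complex.I by field_simp]
    exact Complex.exp_pi_mul_I
  -- ζ⁻¹
  have hζinv : ζ⁻¹ = Complex.exp ((-(Real.pi / q) : ℝ) * Complex.I) := by
    rw [hζ', ← Complex.exp_neg]; congr 1; push_cast; ring
  have hw : ζ ^ (q - 1) = -ζ⁻¹ := by
    have h1 : ζ ^ (q - 1) * ζ = ζ ^ q := by
      rw [← pow_succ]; congr 1; omega
    field_simp
    rw [h1, hζq]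
  have hwim : (ζ ^ (q - 1)).im = Real.sin (Real.pi / q) := by
    rw [hw, hζinv]
    simp only [Complex.neg_im, Complex.exp_ofReal_mul_I_im, Real.sin_neg, neg_neg]
  have hspos : 0 < Real.sin (Real.pi / q) := by
    apply Real.sin_pos_of_pos_of_lt_pi
    · positivity
    · have : (1:ℝ) < q := by exact_mod_cast (by omega : 1 < q)
      rw [div_lt_iff₀ (by positivity)]
      nlinarith [Real.pi_pos]
  have hlamC : (lam : ℂ) = ζ + ζ⁻¹ := by
    rw [hlam, hζinv, hζ', Complex.exp_mul_I, Complex.exp_mul_I]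
    push_cast
    rw [Complex.cos_neg, Complex.sin_neg]
    ring
  have key : ∀ z : ℂ, a₁ (a₂ z) = -ζ ^ 2 * z := by
    intro z
    set w := ζ ^ (q - 1) with hwdef
    set x₂ : ℝ := z.im / w.im with hx2
    set x₁ : ℝ := z.re - x₂ * w.re with hx1
    have hwim0 : w.im ≠ 0 := by rw [hwim]; exact ne_of_gt hspos
    have hz : z = (x₁ : ℂ) + (x₂ : ℂ) * w := by
      apply Complex.ext
      · simp [hx1]
      · simp [hx1, hx2]
        field_simp
    rw [hz, ha₂, ha₁]
    push_cast
    rw [hlamC, hw]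
    field_simp
    ring
  have iter : ∀ n : ℕ, ∀ z : ℂ, (a₁ ∘ a₂)^[n] z = (-ζ ^ 2) ^ n * z := by
    intro n
    induction n with
    | zero => simp
    | succ n ih =>
      intro z
      rw [Function.iterate_succ_apply', ih, Function.comp_apply, key]
      ring
  refine ⟨key, ?_, ?_, ?_⟩
  · intro hmod z
    obtain ⟨m, hm⟩ : ∃ m, q = 2 * m := ⟨q / 2, by omega⟩
    have h1 : ((-1 : ℂ)) ^ q = 1 := Even.neg_one_pow ⟨m, by omega⟩
    have h2 : ζ ^ (2 * q) = 1 := by rw [mul_comm, pow_mul, hζq]; norm_num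
    rw [iter, neg_pow, ← pow_mul, h1, h2, one_mul, one_mul]
  · intro hmod z
    obtain ⟨m, hm⟩ : ∃ m, q = 4 * m ∧ q / 2 = 2 * m := by
      exact ⟨q / 4, by omega, by omega⟩
    obtain ⟨hm1, hm2⟩ := hm
    rw [iter, hm2, neg_pow, ← pow_mul]
    have h1 : ((-1 : ℂ)) ^ (2 * m) = 1 := Even.neg_one_pow ⟨m, by ring⟩
    have h2 : ζ ^ (2 * (2 * m)) = -1 := by rw [show 2 * (2 * m) = q by omega, hζq]
    rw [h1, h2]; ring
  · intro z
    rw [iter, neg_pow, ← pow_mul]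
    have h1 : ((-1 : ℂ)) ^ (2 * q) = 1 := Even.neg_one_pow ⟨q, by ring⟩
    have h2 : ζ ^ (2 * (2 * q)) = 1 := by
      rw [show 2 * (2 * q) = q * 4 by ring, pow_mul, hζq]; norm_num
    rw [h1, h2, one_mul, one_mul]
end
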